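/- arXiv:2112.07182 — 2 statements merged into one kernel-verified Lean document; each statement's English description precedes it below -/
import Mathlib

section
/- For n ≥ 2 and a ∈ ℂ, the polynomial f_a(z₀,…,z_n) = Σ_{i=0}^n z_i^{n+1} − a·∏_{i=0}^n z_i has a critical point other than the origin (equivalently, the projective hypersurface {f_a = 0} ⊂ ℙ^n is singular) if and only if a^{n+1} = (n+1)^{n+1}. -/
/-!
Multiplying the `i`-th equation `c zᵢⁿ = a ∏_{j ≠ i} z_j` by `zᵢ` gives `c zᵢⁿ⁺¹ = a ∏ z` for every
`i`. If `∏ z = 0` this forces `z = 0`; otherwise multiplying over all `n + 1` indices and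
cancelling `(∏ z)ⁿ⁺¹` gives `cⁿ⁺¹ = aⁿ⁺¹`. Conversely, when `aⁿ⁺¹ = cⁿ⁺¹` the point
`(c / a, 1, …, 1)` is a critical point.
-/

open Finset

variable {K ι : Type*} [Field K] [Fintype ι] [DecidableEq ι]

/-- All partial derivatives of `c / (n + 1) · ∑ zᵢⁿ⁺¹ - a ∏ zᵢ` vanish at `z`; the Dwork
polynomial `f_a` is the case `c = n + 1`. -/
def IsDworkCritical (n : ℕ) (c a : K) (z : ι → K) : Prop :=
  ∀ i, c * z i ^ n - a * ∏ j ∈ univ.erase i, z j = 0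

namespace IsDworkCritical

variable {n : ℕ} {c a : K} {z : ι → K}

theorem mul_pow_succ_eq (hz : IsDworkCritical n c a z) (i : ι) :
    c * z i ^ (n + 1) = a * ∏ j, z j := by
  rw [← prod_erase_mul _ _ (mem_univ i), pow_succ, ← mul_assoc, ← mul_assoc,
    sub_eq_zero.mp (hz i)]

theorem prod_ne_zero (hz : IsDworkCritical n c a z) (hc : c ≠ 0) (hz₀ : z ≠ 0) :
    ∏ j, z j ≠ 0 := by
  intro hP
  refine hz₀ (funext fun i => ?_)
  have := hz.mul_pow_succ_eq i
  rw [hP, mul_zero, mul_eq_zero, or_iff_right hc] at this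
  exact pow_eq_zero_iff n.succ_ne_zero |>.mp this

theorem pow_eq (hz : IsDworkCritical n c a z) (hcard : Fintype.card ι = n + 1) (hc : c ≠ 0)
    (hz₀ : z ≠ 0) : a ^ (n + 1) = c ^ (n + 1) := by
  have hprod : ∏ i, c * z i ^ (n + 1) = ∏ _i : ι, a * ∏ j, z j :=
    prod_congr rfl fun i _ => hz.mul_pow_succ_eq i
  rw [prod_mul_distrib, prod_const, prod_pow, prod_const, card_univ, hcard, mul_pow] at hprod
  exact (mul_right_cancel₀ (pow_ne_zero _ (hz.prod_ne_zero hc hz₀)) hprod).symm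

end IsDworkCritical

theorem isDworkCritical_update_one {n : ℕ} {c a : K} (ha : a ≠ 0)
    (h : a ^ (n + 1) = c ^ (n + 1)) (i₀ : ι) :
    IsDworkCritical n c a (Function.update 1 i₀ (c / a)) := by
  intro i
  rcases eq_or_ne i i₀ with rfl | hi
  · rw [prod_update_of_notMem (notMem_erase i _), Function.update_self, div_pow]
    simp only [Pi.one_apply, prod_const_one, mul_one]
    field_simp
    linear_combination -h
  · rw [prod_update_of_mem (mem_erase.mpr ⟨hi.symm, mem_univ i₀⟩),
      Function.update_of_ne hi]
    simp only [Pi.one_apply, prod_const_one, one_pow]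
    field_simp
    ring

theorem exists_ne_zero_isDworkCritical_iff {n : ℕ} {c a : K} (hcard : Fintype.card ι = n + 1)
    (hc : c ≠ 0) : (∃ z : ι → K, z ≠ 0 ∧ IsDworkCritical n c a z) ↔ a ^ (n + 1) = c ^ (n + 1) := by
  refine ⟨fun ⟨z, hz₀, hz⟩ => hz.pow_eq hcard hc hz₀, fun h => ?_⟩
  have ha : a ≠ 0 := by
    rintro rfl
    exact hc (pow_eq_zero_iff n.succ_ne_zero |>.mp (by rw [← h, zero_pow n.succ_ne_zero]))
  obtain ⟨i₀⟩ : Nonempty ι := Fintype.card_pos_iff.mp (hcard ▸ n.succ_pos)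
  refine ⟨Function.update 1 i₀ (c / a), fun h₀ => ?_, isDworkCritical_update_one ha h i₀⟩
  have := congrFun h₀ i₀
  rw [Function.update_self, Pi.zero_apply, div_eq_zero_iff] at this
  exact this.elim hc ha

theorem stmt2_general (n : ℕ) (a : ℂ) :
    (∃ z : Fin (n+1) → ℂ, z ≠ 0 ∧
        ∀ i, ((n : ℂ) + 1) * z i ^ n - a * ∏ j ∈ Finset.univ.erase i, z j = 0)
      ↔ a ^ (n+1) = ((n : ℂ) + 1) ^ (n+1) :=
  exists_ne_zero_isDworkCritical_iff (Fintype.card_fin _) (Nat.cast_add_one_ne_zero n)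

/-- for n ≥ 2 and a ∈ ℂ, the Dwork polynomial
f_a(z) = Σ_{i=0}^n z_i^{n+1} − a ∏_{i=0}^n z_i has a critical point other than the
origin (a common zero z ≠ 0 of all partial derivatives
∂f_a/∂z_i = (n+1) z_i^n − a ∏_{j≠i} z_j) if and only if a^{n+1} = (n+1)^{n+1}. -/
theorem stmt2 (n : ℕ) (hn : 2 ≤ n) (a : ℂ) :
    (∃ z : Fin (n+1) → ℂ, z ≠ 0 ∧
        ∀ i, ((n : ℂ) + 1) * z i ^ n - a * ∏ j ∈ Finset.univ.erase i, z j = 0)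
      ↔ a ^ (n+1) = ((n : ℂ) + 1) ^ (n+1) :=
  stmt2_general n a
end

section
/- (Clausen-type symmetric square) The third-order differential operator θ(θ−1/4)(θ−2/4) − b(θ+1/4)³ annihilates the square of any solution of the second-order operator θ(θ−1/4) − b(θ+1/8)², where θ = b d/db. Concretely, if u is a formal power series solution (times b^ρ) of (θ(θ−1/4) − b(θ+1/8)²)u = 0, then (θ(θ−1/4)(θ−2/4) − b(θ+1/4)³)(u²) = 0. -/
/- A (generalized) series b^ρ·Σ_{k≥0} g_k b^k is encoded by the exponent shift ρ ∈ ℂ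
together with its coefficient sequence g : ℕ → ℂ; the Euler operator θ = b·d/db acts on
b^{ρ+k} by multiplication by (ρ+k), so an ODE in θ becomes a coefficient recurrence. -/

/-- `SolSecond ρ g` says that u = b^ρ Σ g_k b^k satisfies (θ(θ−1/4) − b(θ+1/8)²) u = 0. -/
def SolSecond (ρ : ℂ) (g : ℕ → ℂ) : Prop :=
  ∀ k : ℕ, (ρ + k) * (ρ + k - 1/4) * g k
      = if k = 0 then 0 else (ρ + (k - 1 : ℕ) + 1/8)^2 * g (k - 1)

/-- `SolThird ρ h` says that v = b^ρ Σ h_k b^k satisfies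
(θ(θ−1/4)(θ−2/4) − b(θ+1/4)³) v = 0. -/
def SolThird (ρ : ℂ) (h : ℕ → ℂ) : Prop :=
  ∀ k : ℕ, (ρ + k) * (ρ + k - 1/4) * (ρ + k - 2/4) * h k
      = if k = 0 then 0 else (ρ + (k - 1 : ℕ) + 1/4)^3 * h (k - 1)

/-!
Write `x = ρ + i`, `y = ρ + j` for a term `g i * g j` of the square, so that `x + y = 2ρ + k`.
The cubic indicial polynomial of the symmetric square splits, after symmetrisation in `x ↔ y`,
as `(6x + 2y - 1)·y(y - 1/4)` plus its mirror image, and likewise the cubic `(x + y + 1/4)³`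
as `(6x + 2y + 1)·(y + 1/8)²` plus its mirror image. Applying the recurrence of `u` to the
factor `y(y - 1/4) g j` turns the first splitting into the second, with `y` shifted by one.
-/

open Finset Finset.Nat

lemma Finset.Nat.sum_antidiagonal_eq_of_add_swap {M : Type*} [AddCommMonoid M]
    [IsAddTorsionFree M] {n : ℕ} {F G : ℕ × ℕ → M}
    (h : ∀ p ∈ antidiagonal n, F p + F p.swap = G p + G p.swap) :
    ∑ p ∈ antidiagonal n, F p = ∑ p ∈ antidiagonal n, G p := by
  refine nsmul_right_injective two_ne_zero ?_
  simp only [two_nsmul]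
  nth_rewrite 2 [← sum_antidiagonal_swap]
  nth_rewrite 4 [← sum_antidiagonal_swap]
  rw [← sum_add_distrib, ← sum_add_distrib]
  exact sum_congr rfl h

lemma clausen_split_indicial (x y : ℂ) :
    2 * ((x + y) * (x + y - 1/4) * (x + y - 2/4))
      = (6 * x + 2 * y - 1) * (y * (y - 1/4)) + (6 * y + 2 * x - 1) * (x * (x - 1/4)) := by
  ring

lemma clausen_split_shift (x y : ℂ) :
    2 * (x + y + 1/4) ^ 3
      = (6 * x + 2 * y + 1) * (y + 1/8) ^ 2 + (6 * y + 2 * x + 1) * (x + 1/8) ^ 2 := by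
  ring

namespace SolSecond

variable {ρ : ℂ} {g : ℕ → ℂ}

lemma indicial_zero (hg : SolSecond ρ g) : ρ * (ρ - 1/4) * g 0 = 0 := by
  simpa using hg 0

lemma succ (hg : SolSecond ρ g) (j : ℕ) :
    (ρ + j + 1) * (ρ + j + 1 - 1/4) * g (j + 1) = (ρ + j + 1/8) ^ 2 * g j := by
  simpa [add_assoc] using hg (j + 1)

end SolSecond

section

variable (ρ : ℂ) (g : ℕ → ℂ)

lemma indicial_mul_sum_antidiagonal (n : ℕ) :
    (2 * ρ + n) * (2 * ρ + n - 1/4) * (2 * ρ + n - 2/4) * ∑ p ∈ antidiagonal n, g p.1 * g p.2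
      = ∑ p ∈ antidiagonal n, (6 * (ρ + p.1) + 2 * (ρ + p.2) - 1) * g p.1
          * ((ρ + p.2) * (ρ + p.2 - 1/4) * g p.2) := by
  rw [mul_sum]
  refine sum_antidiagonal_eq_of_add_swap fun p hp => ?_
  have hx : 2 * ρ + n = (ρ + p.1) + (ρ + p.2) := by
    rw [← mem_antidiagonal.mp hp]; push_cast; ring
  have key := clausen_split_indicial (ρ + p.1) (ρ + p.2)
  simp only [Prod.fst_swap, Prod.snd_swap, hx]
  linear_combination g p.1 * g p.2 * key / 2

lemma shift_mul_sum_antidiagonal (n : ℕ) :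
    (2 * ρ + n + 1/4) ^ 3 * ∑ p ∈ antidiagonal n, g p.1 * g p.2
      = ∑ p ∈ antidiagonal n, (6 * (ρ + p.1) + 2 * (ρ + p.2) + 1) * g p.1
          * ((ρ + p.2 + 1/8) ^ 2 * g p.2) := by
  rw [mul_sum]
  refine sum_antidiagonal_eq_of_add_swap fun p hp => ?_
  have hx : 2 * ρ + n = (ρ + p.1) + (ρ + p.2) := by
    rw [← mem_antidiagonal.mp hp]; push_cast; ring
  have key := clausen_split_shift (ρ + p.1) (ρ + p.2)
  simp only [Prod.fst_swap, Prod.snd_swap, hx]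
  linear_combination g p.1 * g p.2 * key / 2

end

lemma SolSecond.sum_antidiagonal_succ_weighted {ρ : ℂ} {g : ℕ → ℂ} (hg : SolSecond ρ g) (n : ℕ) :
    ∑ p ∈ antidiagonal (n + 1), (6 * (ρ + p.1) + 2 * (ρ + p.2) - 1) * g p.1
        * ((ρ + p.2) * (ρ + p.2 - 1/4) * g p.2)
      = ∑ p ∈ antidiagonal n, (6 * (ρ + p.1) + 2 * (ρ + p.2) + 1) * g p.1
          * ((ρ + p.2 + 1/8) ^ 2 * g p.2) := by
  rw [sum_antidiagonal_succ']
  simp only [Nat.cast_zero, add_zero, hg.indicial_zero, mul_zero, zero_add, Nat.cast_add_one,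
    ← add_assoc, hg.succ]
  exact sum_congr rfl fun p _ => by ring

/-- Clausen-type symmetric square: if u = b^ρ Σ g_k b^k is a solution of
the second-order operator θ(θ−1/4) − b(θ+1/8)², then its square
u² = b^{2ρ} Σ_k (Σ_{i+j=k} g_i g_j) b^k is annihilated by the third-order operator
θ(θ−1/4)(θ−2/4) − b(θ+1/4)³. -/
theorem stmt9 (ρ : ℂ) (g : ℕ → ℂ) (hg : SolSecond ρ g) :
    SolThird (2 * ρ) (fun k => ∑ i ∈ Finset.range (k+1), g i * g (k - i)) := by
  intro k
  simp only [← sum_antidiagonal_eq_sum_range_succ fun i j => g i * g j]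
  rw [indicial_mul_sum_antidiagonal]
  rcases k with _ | n
  · simp only [if_true, antidiagonal_zero, sum_singleton, Nat.cast_zero, add_zero,
      hg.indicial_zero, mul_zero]
  · rw [if_neg n.succ_ne_zero, Nat.add_sub_cancel, hg.sum_antidiagonal_succ_weighted,
      shift_mul_sum_antidiagonal]
end
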